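/- arXiv:1809.07667 — 2 statements merged into one kernel-verified Lean document; each statement's English description precedes it below -/
import Mathlib

section
/- The action of ℝ^m ⋊ ℝ_{>0} on Conf_{mn}(U,V) by x ↦ λx + v is proper. -/
/-! The map `(g, x) ↦ (g • x, x)` has a continuous left inverse, so it is a closed embedding,
hence proper. The inverse comes from an equivariant frame: a centre `c x ∈ ℝ^m` and a scale
`s x > 0` with `c (λx + t) = λ c x + t` and `s (λx + t) = λ s x`, from which `g = (t, λ)` is
recovered as `λ = s (g • x) / s x` and `t = c (g • x) - λ c x`. One aerial point gives such a
frame (its `ℝ^m`-part and the norm of its vertical part); without aerial points, two distinct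
terrestrial points do (one of them and their distance). -/

/-- The colored configuration space `Conf_{mn}(U,V) = Conf_{ℝ^m}(U) × Conf_{ℝ^n∖ℝ^m}(V)`:
injective families of terrestrial points in `ℝ^m` and of aerial points in `ℝ^n ∖ ℝ^m`. -/
def ConfMN (m n : ℕ) (U V : Type*) : Type _ :=
  {p : (U → (Fin m → ℝ)) × (V → (Fin n → ℝ)) //
    Function.Injective p.1 ∧ Function.Injective p.2 ∧
      ∀ v, ∃ i : Fin n, m ≤ (i : ℕ) ∧ p.2 v i ≠ 0}

instance (m n : ℕ) (U V : Type*) : TopologicalSpace (ConfMN m n U V) := by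
  unfold ConfMN; infer_instance

/-- Extension of a translation vector `t ∈ ℝ^m` by zero to `ℝ^n`. -/
def extT (m n : ℕ) (t : Fin m → ℝ) : Fin n → ℝ :=
  fun i => if h : (i : ℕ) < m then t ⟨i, h⟩ else 0

/-- Action of `(t, λ) ∈ ℝ^m ⋊ ℝ_{>0}` on `Conf_{mn}(U,V)`, by `x ↦ λx + t`. -/
def vscAct (m n : ℕ) (U V : Type*)
    (g : (Fin m → ℝ) × {lam : ℝ // 0 < lam}) (x : ConfMN m n U V) :
    ConfMN m n U V :=
  ⟨(fun u i => g.2.1 * x.1.1 u i + g.1 i,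
    fun v i => g.2.1 * x.1.2 v i + extT m n g.1 i), by
    obtain ⟨⟨a, b⟩, ha, hb, hb'⟩ := x
    refine ⟨?_, ?_, ?_⟩
    · intro u u' h
      apply ha
      funext i
      have h1 := congrFun h i
      simp only at h1
      have h2 : g.2.1 * a u i = g.2.1 * a u' i := by linarith
      exact mul_left_cancel₀ (ne_of_gt g.2.2) h2
    · intro v v' h
      apply hb
      funext i
      have h1 := congrFun h i
      simp only at h1
      have h2 : g.2.1 * b v i = g.2.1 * b v' i := by linarith
      exact mul_left_cancel₀ (ne_of_gt g.2.2) h2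
    · intro v
      obtain ⟨i, hi, hne⟩ := hb' v
      refine ⟨i, hi, ?_⟩
      have hz : extT m n g.1 i = 0 := by
        unfold extT
        rw [dif_neg (by omega)]
      simp only [hz, add_zero]
      exact mul_ne_zero (ne_of_gt g.2.2) hne⟩

instance {m n : ℕ} {U V : Type*} : T2Space (ConfMN m n U V) :=
  inferInstanceAs (T2Space (Subtype _))

section extT

variable {m n : ℕ}

theorem extT_castLE (hmn : m ≤ n) (t : Fin m → ℝ) (i : Fin m) :
    extT m n t (Fin.castLE hmn i) = t i := by
  simp [extT]

theorem extT_of_le (t : Fin m → ℝ) {i : Fin n} (hi : m ≤ (i : ℕ)) : extT m n t i = 0 :=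
  dif_neg (by omega)

@[fun_prop]
theorem continuous_extT : Continuous (extT m n) :=
  continuous_pi fun i => by unfold extT; split_ifs <;> fun_prop

end extT

section vscAct

variable {m n : ℕ} {U V : Type*}

theorem vscAct_fst (g : (Fin m → ℝ) × {lam : ℝ // 0 < lam}) (x : ConfMN m n U V) (u : U) :
    (vscAct m n U V g x).1.1 u = g.2.1 • x.1.1 u + g.1 := rfl

theorem vscAct_snd (g : (Fin m → ℝ) × {lam : ℝ // 0 < lam}) (x : ConfMN m n U V) (v : V) :
    (vscAct m n U V g x).1.2 v = g.2.1 • x.1.2 v + extT m n g.1 := rfl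

theorem continuous_vscAct :
    Continuous fun p : ((Fin m → ℝ) × {lam : ℝ // 0 < lam}) × ConfMN m n U V =>
      vscAct m n U V p.1 p.2 := by
  unfold vscAct
  fun_prop

end vscAct

structure EquivariantFrame (m n : ℕ) (U V : Type*) where
  center : ConfMN m n U V → Fin m → ℝ
  scale : ConfMN m n U V → ℝ
  continuous_center : Continuous center
  continuous_scale : Continuous scale
  scale_pos : ∀ x, 0 < scale x
  center_vscAct : ∀ g x, center (vscAct m n U V g x) = g.2.1 • center x + g.1
  scale_vscAct : ∀ g x, scale (vscAct m n U V g x) = g.2.1 * scale x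

namespace EquivariantFrame

variable {m n : ℕ} {U V : Type*}

theorem isProperMap (F : EquivariantFrame m n U V) :
    IsProperMap fun p : ((Fin m → ℝ) × {lam : ℝ // 0 < lam}) × ConfMN m n U V =>
      (vscAct m n U V p.1 p.2, p.2) := by
  let ratio (z : ConfMN m n U V × ConfMN m n U V) : {lam : ℝ // 0 < lam} :=
    ⟨F.scale z.1 / F.scale z.2, div_pos (F.scale_pos _) (F.scale_pos _)⟩
  have hratio : Continuous ratio :=
    (F.continuous_scale.comp continuous_fst).div (F.continuous_scale.comp continuous_snd)
      (fun z => (F.scale_pos z.2).ne') |>.subtype_mk _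
  have hc := F.continuous_center
  refine (Function.LeftInverse.isClosedEmbedding
    (f := fun z => ((F.center z.1 - (ratio z).1 • F.center z.2, ratio z), z.2)) ?_ ?_
    (continuous_vscAct.prodMk continuous_snd)).isProperMap
  · rintro ⟨⟨t, lam⟩, x⟩
    have hlam : ratio (vscAct m n U V (t, lam) x, x) = lam := by
      ext
      simp only [ratio, F.scale_vscAct, mul_div_assoc, div_self (F.scale_pos x).ne', mul_one]
    simp only [hlam, F.center_vscAct, add_sub_cancel_left]
  · fun_prop

def ofAerial (hmn : m ≤ n) (v : V) : EquivariantFrame m n U V where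
  center x i := x.1.2 v (Fin.castLE hmn i)
  scale x := ‖fun i : {i : Fin n // m ≤ (i : ℕ)} => x.1.2 v i‖
  continuous_center := by fun_prop
  continuous_scale := by fun_prop
  scale_pos x := by
    obtain ⟨i, hi, hne⟩ := x.2.2.2 v
    exact norm_pos_iff.2 fun h => hne (congrFun h ⟨i, hi⟩)
  center_vscAct g x := by
    ext i
    simp [vscAct_snd, extT_castLE]
  scale_vscAct g x := by
    rw [← abs_of_pos g.2.2, ← Real.norm_eq_abs, ← norm_smul]
    congr 1
    ext ⟨i, hi⟩
    simp [vscAct_snd, extT_of_le _ hi]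

def ofTerrestrialPair {u₀ u₁ : U} (hu : u₀ ≠ u₁) : EquivariantFrame m n U V where
  center x := x.1.1 u₀
  scale x := ‖x.1.1 u₀ - x.1.1 u₁‖
  continuous_center := by fun_prop
  continuous_scale := by fun_prop
  scale_pos x := norm_pos_iff.2 (sub_ne_zero.2 (x.2.1.ne hu))
  center_vscAct g x := vscAct_fst g x u₀
  scale_vscAct g x := by
    rw [vscAct_fst, vscAct_fst, add_sub_add_right_eq_sub, ← smul_sub, norm_smul,
      Real.norm_eq_abs, abs_of_pos g.2.2]

end EquivariantFrame

theorem vsc_action_proper_general (m n : ℕ) (hmn : m + 2 ≤ n)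
    {U V : Type*} [Fintype U] [Fintype V]
    (hcard : 2 ≤ Fintype.card U + 2 * Fintype.card V) :
    IsProperMap (fun p : ((Fin m → ℝ) × {lam : ℝ // 0 < lam}) × ConfMN m n U V =>
      (vscAct m n U V p.1 p.2, p.2)) := by
  rcases isEmpty_or_nonempty V with hV | ⟨⟨v⟩⟩
  · obtain ⟨u₀, u₁, hu⟩ := Fintype.exists_pair_of_one_lt_card (α := U)
      (by simpa [Fintype.card_eq_zero, Nat.succ_le_iff] using hcard)
    exact (EquivariantFrame.ofTerrestrialPair hu).isProperMap
  · exact (EquivariantFrame.ofAerial (by omega) v).isProperMap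

/-- The action of `ℝ^m ⋊ ℝ_{>0}` on `Conf_{mn}(U,V)` by
`x ↦ λx + v` is proper: the map `G × X → X × X`, `(g,x) ↦ (g·x, x)` is a
proper map. -/
theorem vsc_action_proper (m n : ℕ) (hm : 1 ≤ m) (hmn : m + 2 ≤ n)
    {U V : Type*} [Fintype U] [Fintype V]
    (hcard : 2 ≤ Fintype.card U + 2 * Fintype.card V) :
    IsProperMap (fun p : ((Fin m → ℝ) × {lam : ℝ // 0 < lam}) × ConfMN m n U V =>
      (vscAct m n U V p.1 p.2, p.2)) :=
  vsc_action_proper_general m n hmn hcard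
end

section
/- In the algebra vsc^∨_{mn}(0,l), a monomial basis is given by products ∏ ω_{i_s j_s} · ∏ η_k where the edge-monomials range over the usual admissible Arnold monomials (i_s < j_s, with the j_s distinct) and each connected component of the graph formed by the edges carries at most one factor η (which may be placed at the minimal vertex of its component), with isolated vertices allowed to carry η; in particular dim vsc^∨_{mn}(0,2) in degree (n−1)+(n−m−1) equals 1. -/
/-!
Write `p = n - 1 = deg ω` and `q = n - m - 1 = deg η`, so that `0 < q < p`. A word in the
generators of degree `p + q` then contains either one `ω` and one `η`, or no `ω` and at least
three `η`'s. In the second case two of the first three `η`'s carry the same index, so the word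
vanishes by `η_i² = 0` and graded commutativity; in the first case `η_1 ω_{12} = η_2 ω_{12}` and
`ω_{21} = ±ω_{12}` put it in the span of `η_1 ω_{12}`. This class is nonzero: sending every
`ω_{ij}` to `±x` and every `η_i` to `y` is a representation of `vsc^∨_{mn}(0,l)` on the
four-dimensional algebra `ℝ⟨x, y⟩ / (x², y², xy - (-1)^{pq} yx)`, in which `yx ≠ 0`.
-/

/-- Generators of `vsc^∨_{mn}(0,l)`: the `ω_{ij}` (for `i ≠ j`, degree `n−1`)
and the `η_i` (degree `n−m−1`). -/
abbrev VscGen (l : ℕ) : Type := {p : Fin l × Fin l // p.1 ≠ p.2} ⊕ Fin l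

/-- Degrees of the generators: `deg ω_{ij} = n−1`, `deg η_i = n−m−1`. -/
def vscDeg (n m l : ℕ) : VscGen l → ℕ
  | Sum.inl _ => n - 1
  | Sum.inr _ => n - m - 1

/-- The defining relations of `vsc^∨_{mn}(0,l)`. -/
inductive VscRel (n m l : ℕ) :
    FreeAlgebra ℝ (VscGen l) → FreeAlgebra ℝ (VscGen l) → Prop
  | comm (g h : VscGen l) :
      VscRel n m l (FreeAlgebra.ι ℝ g * FreeAlgebra.ι ℝ h)
        (((-1 : ℝ) ^ (vscDeg n m l g * vscDeg n m l h)) •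
          (FreeAlgebra.ι ℝ h * FreeAlgebra.ι ℝ g))
  | sym (i j : Fin l) (h : i ≠ j) :
      VscRel n m l (FreeAlgebra.ι ℝ (Sum.inl ⟨(j, i), h.symm⟩))
        (((-1 : ℝ) ^ n) • FreeAlgebra.ι ℝ (Sum.inl ⟨(i, j), h⟩))
  | sq (p : {p : Fin l × Fin l // p.1 ≠ p.2}) :
      VscRel n m l (FreeAlgebra.ι ℝ (Sum.inl p) * FreeAlgebra.ι ℝ (Sum.inl p)) 0
  | arnold (i j k : Fin l) (hij : i ≠ j) (hjk : j ≠ k) (hki : k ≠ i) :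
      VscRel n m l
        (FreeAlgebra.ι ℝ (Sum.inl ⟨(i, j), hij⟩) * FreeAlgebra.ι ℝ (Sum.inl ⟨(j, k), hjk⟩)
          + FreeAlgebra.ι ℝ (Sum.inl ⟨(j, k), hjk⟩) * FreeAlgebra.ι ℝ (Sum.inl ⟨(k, i), hki⟩)
          + FreeAlgebra.ι ℝ (Sum.inl ⟨(k, i), hki⟩) * FreeAlgebra.ι ℝ (Sum.inl ⟨(i, j), hij⟩)) 0
  | etaSq (i : Fin l) :
      VscRel n m l (FreeAlgebra.ι ℝ (Sum.inr i) * FreeAlgebra.ι ℝ (Sum.inr i)) 0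
  | etaOmega (i j : Fin l) (h : i ≠ j) :
      VscRel n m l
        (FreeAlgebra.ι ℝ (Sum.inr i) * FreeAlgebra.ι ℝ (Sum.inl ⟨(i, j), h⟩))
        (FreeAlgebra.ι ℝ (Sum.inr j) * FreeAlgebra.ι ℝ (Sum.inl ⟨(i, j), h⟩))

/-- The algebra `vsc^∨_{mn}(0,l)`, presented by generators and relations. -/
abbrev VscAlgebra (n m l : ℕ) : Type := RingQuot (VscRel n m l)

/-- The degree-`k` graded piece of `vsc^∨_{mn}(0,l)`. -/
noncomputable def vscGraded (n m l : ℕ) (k : ℕ) : Submodule ℝ (VscAlgebra n m l) :=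
  Submodule.span ℝ {x | ∃ w : List (VscGen l), (w.map (vscDeg n m l)).sum = k ∧
    x = (w.map (fun g => RingQuot.mkAlgHom ℝ (VscRel n m l) (FreeAlgebra.ι ℝ g))).prod}

/-- `signedSqZeroX s` and `signedSqZeroY` are the left multiplications by `x` and `y` on
`ℝ⟨x, y⟩ / (x², y², xy - s yx)`, in the basis `1, x, y, yx`. -/
def signedSqZeroX (s : ℝ) : Matrix (Fin 4) (Fin 4) ℝ :=
  !![0, 0, 0, 0; 1, 0, 0, 0; 0, 0, 0, 0; 0, 0, s, 0]

def signedSqZeroY : Matrix (Fin 4) (Fin 4) ℝ :=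
  !![0, 0, 0, 0; 0, 0, 0, 0; 1, 0, 0, 0; 0, 1, 0, 0]

section SignedSqZero

variable (s : ℝ)

theorem signedSqZeroX_mul_self : signedSqZeroX s * signedSqZeroX s = 0 := by
  ext i j
  fin_cases i <;> fin_cases j <;> simp [signedSqZeroX, Matrix.mul_apply, Fin.sum_univ_four]

theorem signedSqZeroY_mul_self : signedSqZeroY * signedSqZeroY = 0 := by
  ext i j
  fin_cases i <;> fin_cases j <;> simp [signedSqZeroY, Matrix.mul_apply, Fin.sum_univ_four]

theorem signedSqZeroX_mul_signedSqZeroY :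
    signedSqZeroX s * signedSqZeroY = s • (signedSqZeroY * signedSqZeroX s) := by
  ext i j
  fin_cases i <;> fin_cases j <;>
    simp [signedSqZeroX, signedSqZeroY, Matrix.mul_apply, Fin.sum_univ_four]

theorem signedSqZeroY_mul_signedSqZeroX {s : ℝ} (hs : s * s = 1) :
    signedSqZeroY * signedSqZeroX s = s • (signedSqZeroX s * signedSqZeroY) := by
  rw [signedSqZeroX_mul_signedSqZeroY, smul_smul, hs, one_smul]

theorem signedSqZeroY_mul_signedSqZeroX_ne_zero :
    signedSqZeroY * signedSqZeroX s ≠ 0 := fun h => by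
  simpa [signedSqZeroX, signedSqZeroY, Matrix.mul_apply, Fin.sum_univ_four] using
    congrFun (congrFun h 3) 0

end SignedSqZero

theorem List.length_eq_countP_isLeft_add_countP_isRight {α β : Type*} (w : List (α ⊕ β)) :
    w.length = w.countP Sum.isLeft + w.countP Sum.isRight := by
  simp only [w.length_eq_countP_add_countP Sum.isLeft, Sum.not_isLeft, Bool.decide_eq_true]

theorem Nat.eq_one_and_eq_one_or_eq_zero_of_mul_add_mul_eq_add {a b p q : ℕ} (hq : 0 < q)
    (hqp : q < p) (h : a * p + b * q = p + q) : a = 1 ∧ b = 1 ∨ a = 0 ∧ 3 ≤ b := by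
  rcases a with _ | _ | a
  · refine .inr ⟨rfl, ?_⟩
    by_contra hb
    interval_cases b <;> omega
  · exact .inl ⟨rfl, Nat.eq_of_mul_eq_mul_right hq (by omega)⟩
  · nlinarith

namespace VscAlgebra

noncomputable def gen (n m : ℕ) {l : ℕ} (g : VscGen l) : VscAlgebra n m l :=
  RingQuot.mkAlgHom ℝ (VscRel n m l) (FreeAlgebra.ι ℝ g)

section Relations

variable (n m : ℕ) {l : ℕ}

theorem gen_mul_gen_comm (g h : VscGen l) :
    gen n m g * gen n m h =
      ((-1 : ℝ) ^ (vscDeg n m l g * vscDeg n m l h)) • (gen n m h * gen n m g) := by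
  simpa only [gen, map_mul, map_smul] using
    RingQuot.mkAlgHom_rel ℝ (VscRel.comm (n := n) (m := m) g h)

theorem gen_omega_swap (i j : Fin l) (h : i ≠ j) :
    gen n m (Sum.inl ⟨(j, i), h.symm⟩) = ((-1 : ℝ) ^ n) • gen n m (Sum.inl ⟨(i, j), h⟩) := by
  simpa only [gen, map_smul] using
    RingQuot.mkAlgHom_rel ℝ (VscRel.sym (n := n) (m := m) i j h)

theorem gen_eta_mul_self (i : Fin l) : gen n m (Sum.inr i) * gen n m (Sum.inr i) = 0 := by
  simpa only [gen, map_mul, map_zero] using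
    RingQuot.mkAlgHom_rel ℝ (VscRel.etaSq (n := n) (m := m) i)

theorem gen_eta_mul_gen_omega (i j : Fin l) (h : i ≠ j) :
    gen n m (Sum.inr i) * gen n m (Sum.inl ⟨(i, j), h⟩) =
      gen n m (Sum.inr j) * gen n m (Sum.inl ⟨(i, j), h⟩) := by
  simpa only [gen, map_mul] using
    RingQuot.mkAlgHom_rel ℝ (VscRel.etaOmega (n := n) (m := m) i j h)

theorem gen_eta_mul_eta_mul_eta {i j k : Fin l} (h : i = j ∨ j = k ∨ i = k) :
    gen n m (Sum.inr i) * gen n m (Sum.inr j) * gen n m (Sum.inr k) = 0 := by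
  rcases h with rfl | rfl | rfl
  · rw [gen_eta_mul_self, zero_mul]
  · rw [mul_assoc, gen_eta_mul_self, mul_zero]
  · rw [mul_assoc, gen_mul_gen_comm n m (Sum.inr j), mul_smul_comm, ← mul_assoc,
      gen_eta_mul_self, zero_mul, smul_zero]

theorem sum_vscDeg_eq (w : List (VscGen l)) :
    (w.map (vscDeg n m l)).sum =
      w.countP Sum.isLeft * (n - 1) + w.countP Sum.isRight * (n - m - 1) := by
  induction w with
  | nil => simp
  | cons g w ih => cases g <;> simp [List.countP_cons, vscDeg, ih] <;> ring

end Relations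

/-- The sign with which `ω_{ij}` acts as `x`; it makes `ω_{ji} = (-1)^n ω_{ij}` hold. -/
def omegaSign (n : ℕ) {l : ℕ} (i j : Fin l) : ℝ := if i < j then 1 else (-1) ^ n

theorem omegaSign_swap (n : ℕ) {l : ℕ} {i j : Fin l} (h : i ≠ j) :
    omegaSign n j i = (-1) ^ n * omegaSign n i j := by
  rcases h.lt_or_gt with hij | hij
  · simp [omegaSign, hij, hij.not_gt]
  · simp [omegaSign, hij, hij.not_gt, ← mul_pow]

theorem omegaSign_ne_zero (n : ℕ) {l : ℕ} (i j : Fin l) : omegaSign n i j ≠ 0 := by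
  unfold omegaSign; split_ifs <;> simp

section Representation

variable (n m l : ℕ)

noncomputable def matrixGen : VscGen l → Matrix (Fin 4) (Fin 4) ℝ
  | Sum.inl p => omegaSign n p.1.1 p.1.2 • signedSqZeroX ((-1) ^ ((n - 1) * (n - m - 1)))
  | Sum.inr _ => signedSqZeroY

theorem lift_matrixGen_rel ⦃a b : FreeAlgebra ℝ (VscGen l)⦄ (r : VscRel n m l a b) :
    FreeAlgebra.lift ℝ (matrixGen n m l) a = FreeAlgebra.lift ℝ (matrixGen n m l) b := by
  have hs : ((-1 : ℝ) ^ ((n - 1) * (n - m - 1))) * (-1) ^ ((n - 1) * (n - m - 1)) = 1 := by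
    simp [← mul_pow]
  rcases r with ⟨_ | _, _ | _⟩ | ⟨i, j, h⟩ | _ | _ | _ | _ <;>
    simp only [map_mul, map_add, map_smul, map_zero, FreeAlgebra.lift_ι_apply, matrixGen, vscDeg,
      smul_mul_assoc, mul_smul_comm, signedSqZeroX_mul_self,
      signedSqZeroY_mul_self, smul_zero, add_zero]
  · rw [signedSqZeroX_mul_signedSqZeroY, smul_comm]
  · rw [Nat.mul_comm (n - m - 1), signedSqZeroY_mul_signedSqZeroX hs, smul_comm]
  · rw [omegaSign_swap n h, smul_smul]

noncomputable def toMatrix : VscAlgebra n m l →ₐ[ℝ] Matrix (Fin 4) (Fin 4) ℝ :=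
  RingQuot.liftAlgHom ℝ ⟨FreeAlgebra.lift ℝ (matrixGen n m l), lift_matrixGen_rel n m l⟩

theorem toMatrix_gen (g : VscGen l) : toMatrix n m l (gen n m g) = matrixGen n m l g := by
  rw [toMatrix, gen, RingQuot.liftAlgHom_mkAlgHom_apply, FreeAlgebra.lift_ι_apply]

end Representation

theorem gen_eta_mul_gen_omega_ne_zero (n m : ℕ) {l : ℕ} (k : Fin l)
    (p : {p : Fin l × Fin l // p.1 ≠ p.2}) :
    gen n m (Sum.inr k) * gen n m (Sum.inl p) ≠ 0 := fun h => by
  have hY := congrArg (toMatrix n m l) h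
  rw [map_mul, toMatrix_gen, toMatrix_gen, map_zero] at hY
  simp only [matrixGen, mul_smul_comm, smul_eq_zero, omegaSign_ne_zero,
    signedSqZeroY_mul_signedSqZeroX_ne_zero, or_self] at hY

section TwoPoints

variable (n m : ℕ)

theorem gen_eta_mul_gen_omega01 (k : Fin 2) :
    gen n m (Sum.inr k) * gen n m (Sum.inl ⟨(0, 1), by decide⟩) =
      gen n m (Sum.inr 0) * gen n m (Sum.inl ⟨(0, 1), by decide⟩) := by
  fin_cases k
  · rfl
  · exact (gen_eta_mul_gen_omega n m 0 1 (by decide)).symm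

theorem gen_eta_mul_gen_omega_mem_span (k : Fin 2) (p : {p : Fin 2 × Fin 2 // p.1 ≠ p.2}) :
    gen n m (Sum.inr k) * gen n m (Sum.inl p) ∈
      Submodule.span ℝ {gen n m (Sum.inr 0) * gen n m (Sum.inl ⟨(0, 1), by decide⟩)} := by
  obtain ⟨⟨i, j⟩, hij⟩ := p
  obtain ⟨rfl, rfl⟩ | ⟨rfl, rfl⟩ : i = 0 ∧ j = 1 ∨ i = 1 ∧ j = 0 := by simp only at hij; omega
  · rw [gen_eta_mul_gen_omega01 n m k]
    exact Submodule.mem_span_singleton_self _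
  · rw [gen_omega_swap n m (0 : Fin 2) 1 (by decide), mul_smul_comm,
      gen_eta_mul_gen_omega01 n m k]
    exact Submodule.smul_mem _ _ (Submodule.mem_span_singleton_self _)

theorem prod_gen_mem_span_of_sum_vscDeg_eq (hm : 1 ≤ m) (hmn : m + 2 ≤ n) (w : List (VscGen 2))
    (hw : (w.map (vscDeg n m 2)).sum = (n - 1) + (n - m - 1)) :
    (w.map (gen n m)).prod ∈
      Submodule.span ℝ {gen n m (Sum.inr 0) * gen n m (Sum.inl ⟨(0, 1), by decide⟩)} := by
  have hlen := w.length_eq_countP_isLeft_add_countP_isRight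
  rw [sum_vscDeg_eq] at hw
  rcases Nat.eq_one_and_eq_one_or_eq_zero_of_mul_add_mul_eq_add (by omega) (by omega) hw with
    ⟨hω, hη⟩ | ⟨hω, hη⟩
  · obtain ⟨g, h, rfl⟩ := List.length_eq_two.mp (show w.length = 2 by omega)
    simp only [List.map_cons, List.map_nil, List.prod_cons, List.prod_nil, mul_one]
    cases g <;> cases h <;> simp [List.countP_cons] at hω hη
    · rw [gen_mul_gen_comm n m (Sum.inl _)]
      exact Submodule.smul_mem _ _ (gen_eta_mul_gen_omega_mem_span n m _ _)
    · exact gen_eta_mul_gen_omega_mem_span n m _ _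
  · rcases w with _ | ⟨_ | i, _ | ⟨_ | j, _ | ⟨_ | k, w⟩⟩⟩ <;>
      simp [List.countP_cons] at hω hη hlen
    simp only [List.map_cons, List.prod_cons, ← mul_assoc]
    rw [gen_eta_mul_eta_mul_eta n m (by omega), zero_mul]
    exact Submodule.zero_mem _

end TwoPoints

theorem vscGraded_two_eq_span {n m : ℕ} (hm : 1 ≤ m) (hmn : m + 2 ≤ n) :
    vscGraded n m 2 ((n - 1) + (n - m - 1)) =
      Submodule.span ℝ {gen n m (Sum.inr 0) * gen n m (Sum.inl ⟨(0, 1), by decide⟩)} := by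
  refine le_antisymm (Submodule.span_le.mpr ?_) (Submodule.span_le.mpr ?_)
  · rintro _ ⟨w, hw, rfl⟩
    exact prod_gen_mem_span_of_sum_vscDeg_eq n m hm hmn w hw
  · rintro _ rfl
    exact Submodule.subset_span
      ⟨[Sum.inr 0, Sum.inl ⟨(0, 1), by decide⟩], by simp [vscDeg, add_comm], by simp [gen]⟩

end VscAlgebra

/-- key consequence of the monomial-basis description of
`vsc^∨_{mn}(0,l)`, where each connected component of the graph of an
admissible Arnold monomial carries at most one factor `η`: for `l = 2`, the
graded piece of `vsc^∨_{mn}(0,2)` in degree `(n−1)+(n−m−1)` is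
one-dimensional, spanned by the monomial `η_1 ω_{12}` (equivalently by
`η_2 ω_{12}`, since `η_1ω_{12} = η_2ω_{12}`). -/
theorem vsc_two_points_top_degree_one_dimensional (n m : ℕ) (hm : 1 ≤ m) (hmn : m + 2 ≤ n) :
    Module.finrank ℝ (vscGraded n m 2 ((n - 1) + (n - m - 1))) = 1 ∧
    vscGraded n m 2 ((n - 1) + (n - m - 1)) =
      Submodule.span ℝ
        {RingQuot.mkAlgHom ℝ (VscRel n m 2)
          (FreeAlgebra.ι ℝ (Sum.inr (0 : Fin 2)) *
            FreeAlgebra.ι ℝ (Sum.inl ⟨((0 : Fin 2), 1), by decide⟩))} := by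
  have hspan := VscAlgebra.vscGraded_two_eq_span hm hmn
  rw [map_mul]
  refine ⟨?_, hspan⟩
  rw [hspan]
  exact finrank_span_singleton (VscAlgebra.gen_eta_mul_gen_omega_ne_zero n m _ _)
end
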